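/- Let f be a unit-length grid drawing of the cycle graph C_6 on ZMod 6. Then there exist integers a, b such that the image of f equals either {a, a+1, a+2} × {b, b+1} or {a, a+1} × {b, b+1, b+2} (the six lattice points on the boundary of an axis-aligned 2 × 1 or 1 × 2 rectangle). In other words, every unit-length grid drawing of a 6-cycle is a rectangle of side lengths 2 and 1. -/

import Mathlib

/-- The four unit axis vectors in `ℤ × ℤ`. -/
def unitSteps : Set (ℤ × ℤ) := {(1, 0), (-1, 0), (0, 1), (0, -1)}

/-- A unit-length grid drawing of a simple graph: an injective map to lattice
points sending adjacent vertices to points at Euclidean distance 1. -/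
def IsUnitGridDrawing {V : Type*} (G : SimpleGraph V) (f : V → ℤ × ℤ) : Prop :=
  Function.Injective f ∧ ∀ u v : V, G.Adj u v → f u - f v ∈ unitSteps

/-- The cycle graph on `ZMod n`: `i` is adjacent to `i + 1` and `i - 1`. -/
def cycleGraph (n : ℕ) : SimpleGraph (ZMod n) :=
  SimpleGraph.fromRel (fun i j => j = i + 1)

/-!
A closed walk of length `n` with unit steps covers the range of each coordinate twice, so it lies
in a lattice rectangle of width `w` and height `h` with `2 (w + h) ≤ n`. For `n = 6` such a
rectangle has at most `(w + 1)(h + 1)` lattice points with `w + h ≤ 3`, and six distinct ones fit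
only when `{w, h} = {1, 2}`; they then fill the whole rectangle.
-/

open Finset

section ClosedWalk

variable {G : Type*} [AddCommGroup G] [LinearOrder G] [IsOrderedAddMonoid G]

theorem abs_sub_le_sum_Ico_abs_sub (g : ℕ → G) {m n : ℕ} (h : m ≤ n) :
    |g n - g m| ≤ ∑ k ∈ Ico m n, |g (k + 1) - g k| := by
  rw [← sum_Ico_sub (f := g) h]
  exact abs_sum_le_sum_abs _ _

theorem two_nsmul_abs_sub_le_sum_range_abs_sub (g : ℕ → G) {n i j : ℕ} (hg : g n = g 0)
    (hi : i ≤ n) (hj : j ≤ n) :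
    2 • |g j - g i| ≤ ∑ k ∈ range n, |g (k + 1) - g k| := by
  wlog hij : i ≤ j generalizing i j
  · rw [abs_sub_comm]
    exact this hj hi (by omega)
  have hin : |g j - g i| ≤ ∑ k ∈ Ico i j, |g (k + 1) - g k| := abs_sub_le_sum_Ico_abs_sub g hij
  have hout : |g j - g i| ≤ ∑ k ∈ Ico j n, |g (k + 1) - g k| + ∑ k ∈ Ico 0 i, |g (k + 1) - g k| :=
    calc |g j - g i| = |(g n - g j) + (g i - g 0)| := by rw [hg, abs_sub_comm]; abel_nf
      _ ≤ |g n - g j| + |g i - g 0| := abs_add_le _ _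
      _ ≤ _ := add_le_add (abs_sub_le_sum_Ico_abs_sub g hj) (abs_sub_le_sum_Ico_abs_sub g i.zero_le)
  rw [range_eq_Ico, ← sum_Ico_consecutive _ i.zero_le (hij.trans hj),
    ← sum_Ico_consecutive _ hij hj, two_nsmul]
  calc |g j - g i| + |g j - g i| ≤ _ := add_le_add hout hin
    _ = _ := by abel

end ClosedWalk

theorem abs_fst_add_abs_snd_of_mem_unitSteps {p : ℤ × ℤ} (hp : p ∈ unitSteps) :
    |p.1| + |p.2| = 1 := by
  simp only [unitSteps, Set.mem_insert_iff, Set.mem_singleton_iff] at hp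
  rcases hp with rfl | rfl | rfl | rfl <;> rfl

theorem cycleGraph_adj_add_one {n : ℕ} (hn : n ≠ 1) (k : ZMod n) :
    (cycleGraph n).Adj k (k + 1) := by
  refine ⟨fun h => ?_, Or.inl rfl⟩
  have : (1 : ZMod n) = 0 := by simpa using h.symm
  exact hn (ZMod.one_eq_zero_iff.mp this)

section UnitWalk

variable {n : ℕ} [NeZero n] {f : ZMod n → ℤ × ℤ}

theorem two_mul_abs_sub_fst_add_abs_sub_snd_le (hf : ∀ k, f (k + 1) - f k ∈ unitSteps)
    (u v u' v' : ZMod n) :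
    2 * (|(f u).1 - (f v).1| + |(f u').2 - (f v').2|) ≤ n := by
  set g : ℕ → ℤ × ℤ := fun k => f k
  have hg : g n = g 0 := by simp [g]
  have hval (w : ZMod n) : g w.val = f w := congrArg f (ZMod.natCast_zmod_val w)
  have hx := two_nsmul_abs_sub_le_sum_range_abs_sub (fun k => (g k).1)
    (congrArg Prod.fst hg) v.val_lt.le u.val_lt.le
  have hy := two_nsmul_abs_sub_le_sum_range_abs_sub (fun k => (g k).2)
    (congrArg Prod.snd hg) v'.val_lt.le u'.val_lt.le
  have hlength : ∑ k ∈ range n, (|(g (k + 1)).1 - (g k).1| + |(g (k + 1)).2 - (g k).2|) = n := by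
    rw [sum_congr rfl fun k _ => ?_, sum_const, card_range, nsmul_one]
    simpa [g] using abs_fst_add_abs_snd_of_mem_unitSteps (hf k)
  simp only [hval, two_nsmul] at hx hy
  rw [sum_add_distrib] at hlength
  linarith

theorem exists_range_subset_Icc_prod_Icc (hf : ∀ k, f (k + 1) - f k ∈ unitSteps) :
    ∃ (a b : ℤ) (w h : ℕ), Set.range f ⊆ Set.Icc a (a + w) ×ˢ Set.Icc b (b + h) ∧
      2 * (w + h) ≤ n := by
  obtain ⟨u, hu⟩ := Finite.exists_max fun w => (f w).1
  obtain ⟨v, hv⟩ := Finite.exists_min fun w => (f w).1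
  obtain ⟨u', hu'⟩ := Finite.exists_max fun w => (f w).2
  obtain ⟨v', hv'⟩ := Finite.exists_min fun w => (f w).2
  have hper := two_mul_abs_sub_fst_add_abs_sub_snd_le hf u v u' v'
  have hx := hv u
  have hy := hv' u'
  rw [abs_of_nonneg (sub_nonneg.mpr hx), abs_of_nonneg (sub_nonneg.mpr hy)] at hper
  refine ⟨(f v).1, (f v').2, ((f u).1 - (f v).1).toNat, ((f u').2 - (f v').2).toNat, ?_, by omega⟩
  rintro _ ⟨w, rfl⟩
  specialize hu w; specialize hv w; specialize hu' w; specialize hv' w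
  constructor <;> constructor <;> omega

end UnitWalk

theorem Int.card_Icc_self_add (a : ℤ) (w : ℕ) : #(Icc a (a + w)) = w + 1 := by
  rw [Int.card_Icc]
  omega

theorem eq_Icc_prod_Icc_of_card_eq_six {S : Finset (ℤ × ℤ)} {a b : ℤ} {w h : ℕ}
    (hS : S ⊆ Icc a (a + w) ×ˢ Icc b (b + h)) (hcard : #S = 6) (hper : w + h ≤ 3) :
    (w = 2 ∧ h = 1 ∨ w = 1 ∧ h = 2) ∧ S = Icc a (a + w) ×ˢ Icc b (b + h) := by
  have hbox : #S ≤ (w + 1) * (h + 1) := by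
    simpa only [card_product, Int.card_Icc_self_add] using card_le_card hS
  have hshape : w = 2 ∧ h = 1 ∨ w = 1 ∧ h = 2 := by
    have hw : w ≤ 3 := by omega
    interval_cases w <;> omega
  refine ⟨hshape, eq_of_subset_of_card_le hS ?_⟩
  rw [card_product, Int.card_Icc_self_add, Int.card_Icc_self_add, hcard]
  rcases hshape with ⟨rfl, rfl⟩ | ⟨rfl, rfl⟩ <;> rfl

theorem Int.Icc_self_add_one (a : ℤ) : Set.Icc a (a + 1) = {a, a + 1} := by
  ext; simp; omega

theorem Int.Icc_self_add_two (a : ℤ) : Set.Icc a (a + 2) = {a, a + 1, a + 2} := by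
  ext; simp; omega

theorem six_cycle_drawing_is_two_by_one_rectangle
    (f : ZMod 6 → ℤ × ℤ) (hf : IsUnitGridDrawing (cycleGraph 6) f) :
    ∃ a b : ℤ,
      Set.range f = ({a, a + 1, a + 2} : Set ℤ) ×ˢ ({b, b + 1} : Set ℤ) ∨
      Set.range f = ({a, a + 1} : Set ℤ) ×ˢ ({b, b + 1, b + 2} : Set ℤ) := by
  obtain ⟨hinj, hadj⟩ := hf
  obtain ⟨a, b, w, h, hbox, hper⟩ := exists_range_subset_Icc_prod_Icc fun k =>
    hadj _ _ (cycleGraph_adj_add_one (by norm_num) k).symm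
  have hrange : ((univ.image f : Finset (ℤ × ℤ)) : Set (ℤ × ℤ)) = Set.range f := by simp
  have hsub : univ.image f ⊆ Icc a (a + w) ×ˢ Icc b (b + h) := by
    rw [← coe_subset, hrange, coe_product, coe_Icc, coe_Icc]
    exact hbox
  have hcard : #(univ.image f) = 6 := by rw [card_image_of_injective _ hinj, card_univ, ZMod.card]
  obtain ⟨hshape, hrect⟩ := eq_Icc_prod_Icc_of_card_eq_six hsub hcard (by omega)
  rw [← hrange, hrect, coe_product, coe_Icc, coe_Icc]
  refine ⟨a, b, ?_⟩
  rcases hshape with ⟨rfl, rfl⟩ | ⟨rfl, rfl⟩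
  · exact Or.inl (by push_cast; rw [Int.Icc_self_add_two, Int.Icc_self_add_one])
  · exact Or.inr (by push_cast; rw [Int.Icc_self_add_two, Int.Icc_self_add_one])
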